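/- (Lemma 1 of Appendix B, asymptotic form) Fix real numbers a11, a12, a21, a22, σx, σy with a22 ≠ 0 and ã ≠ 0. Let ε₀ > 0 and let c11, c12, c22 : (0, ε₀) → ℝ be such that for each ε ∈ (0, ε₀), (c11(ε), c12(ε), c22(ε)) solves the two-scale Lyapunov system, with c11 and c12 bounded on (0, ε₀). Then c11(ε) = −(σx²*(1 − 2ε*â) + ε*σy²*a12²/a22²)/(2*ã*(1 − ε*â)) + O(ε²) as ε → 0⁺. -/

import Mathlib

/-- `f = O(ε²)` as `ε → 0⁺`, with the bound holding inside `(0, ε₀)`. -/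
def IsO2 (ε₀ : ℝ) (f : ℝ → ℝ) : Prop :=
  ∃ C ε₁ : ℝ, 0 < C ∧ 0 < ε₁ ∧ ε₁ ≤ ε₀ ∧ ∀ ε, 0 < ε → ε < ε₁ → |f ε| ≤ C * ε ^ 2

/-- The two-scale Lyapunov system. -/
def SolvesLyapunov (a11 a12 a21 a22 σx σy ε c11 c12 c22 : ℝ) : Prop :=
  0 = σx ^ 2 + 2 * a11 * c11 + 2 * a12 * c12 ∧
  0 = a11 * c12 + a12 * c22 + c11 * a21 / ε + c12 * a22 / ε ∧
  0 = σy ^ 2 / ε + 2 * c12 * a21 / ε + 2 * c22 * a22 / ε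

/-!
For `ε ≠ 0` the system is linear in `(c11, c12, c22)` and can be solved exactly:
`c11 = -((a22² + ε T) σx² + ε a12² σy²) / (2 T (a22 + ε a11))` with `T = a11 a22 - a12 a21 = a22 ã`.
Subtracting the claimed approximation leaves
`ε² (a11 a22 + a12 a21)(a12² σy² - a12 a21 σx²) / (2 T (a22 + ε a11)(a22² - ε a12 a21))`,
whose coefficient of `ε²` is continuous at `ε = 0`, hence bounded near `0⁺`.
-/

open Filter Topology Asymptotics Set

theorem isO2_of_isBigO {ε₀ : ℝ} (hε₀ : 0 < ε₀) {f : ℝ → ℝ}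
    (hf : f =O[𝓝[>] 0] fun ε => ε ^ 2) : IsO2 ε₀ f := by
  obtain ⟨C, hC, ε₁, hε₁, hbound⟩ := hf.exists_mem_basis (nhdsGT_basis 0)
  refine ⟨C, min ε₁ ε₀, hC, lt_min hε₁ hε₀, min_le_right _ _, fun ε hε hεlt => ?_⟩
  simpa [abs_of_pos hε] using hbound ε ⟨hε, hεlt.trans_le (min_le_left _ _)⟩

theorem SolvesLyapunov.c11_eq {a11 a12 a21 a22 σx σy ε c11 c12 c22 : ℝ}
    (h : SolvesLyapunov a11 a12 a21 a22 σx σy ε c11 c12 c22) (hε : ε ≠ 0)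
    (hT : a11 * a22 - a12 * a21 ≠ 0) (hD : a22 + ε * a11 ≠ 0) :
    c11 = -((a22 ^ 2 + ε * (a11 * a22 - a12 * a21)) * σx ^ 2 + ε * a12 ^ 2 * σy ^ 2)
      / (2 * (a11 * a22 - a12 * a21) * (a22 + ε * a11)) := by
  obtain ⟨h1, h2, h3⟩ := h
  have e2 : 0 = ε * (a11 * c12 + a12 * c22) + c11 * a21 + c12 * a22 := by
    field_simp at h2; linarith
  have e3 : 0 = σy ^ 2 + 2 * c12 * a21 + 2 * c22 * a22 := by
    field_simp at h3; linarith
  rw [eq_div_iff (by positivity)]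
  linear_combination (-(a22 ^ 2 + ε * (a11 * a22 - a12 * a21))) * h1
    + (2 * a12 * a22) * e2 + (-(ε * a12 ^ 2)) * e3

theorem lyapunov_c11_add_approx_eq {a11 a12 a21 a22 σx σy ε : ℝ} (ha22 : a22 ≠ 0)
    (hT : a11 * a22 - a12 * a21 ≠ 0) (hD : a22 + ε * a11 ≠ 0)
    (hE : a22 ^ 2 - ε * (a12 * a21) ≠ 0) :
    -((a22 ^ 2 + ε * (a11 * a22 - a12 * a21)) * σx ^ 2 + ε * a12 ^ 2 * σy ^ 2)
        / (2 * (a11 * a22 - a12 * a21) * (a22 + ε * a11))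
      + (σx ^ 2 * (1 - 2 * ε * (a12 * a21 / a22 ^ 2)) + ε * σy ^ 2 * a12 ^ 2 / a22 ^ 2)
        / (2 * (a11 - a12 * a21 / a22) * (1 - ε * (a12 * a21 / a22 ^ 2)))
    = ε ^ 2 * ((a11 * a22 + a12 * a21) * (a12 ^ 2 * σy ^ 2 - a12 * a21 * σx ^ 2)
        / (2 * (a11 * a22 - a12 * a21) * (a22 + ε * a11) * (a22 ^ 2 - ε * (a12 * a21)))) := by
  have hT' : a22 * a11 - a12 * a21 ≠ 0 := by rwa [mul_comm]
  have hE' : a22 ^ 2 - ε * a12 * a21 ≠ 0 := by rwa [mul_assoc]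
  field_simp
  ring

theorem stmt5_general (a11 a12 a21 a22 σx σy : ℝ) (ha22 : a22 ≠ 0)
    (hat : a11 - a12 * a21 / a22 ≠ 0)
    (ε₀ : ℝ) (hε₀ : 0 < ε₀) (c11 c12 c22 : ℝ → ℝ)
    (hsol : ∀ ε, 0 < ε → ε < ε₀ →
      SolvesLyapunov a11 a12 a21 a22 σx σy ε (c11 ε) (c12 ε) (c22 ε)) :
    IsO2 ε₀ (fun ε =>
      c11 ε +
        (σx ^ 2 * (1 - 2 * ε * (a12 * a21 / a22 ^ 2)) + ε * σy ^ 2 * a12 ^ 2 / a22 ^ 2)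
          / (2 * (a11 - a12 * a21 / a22) * (1 - ε * (a12 * a21 / a22 ^ 2)))) := by
  have hT : a11 * a22 - a12 * a21 ≠ 0 := by
    rw [show a11 * a22 - a12 * a21 = a22 * (a11 - a12 * a21 / a22) by field_simp]
    exact mul_ne_zero ha22 hat
  have hD : ∀ᶠ ε in 𝓝[>] (0 : ℝ), a22 + ε * a11 ≠ 0 :=
    nhdsWithin_le_nhds <| (by fun_prop : Continuous fun ε : ℝ => a22 + ε * a11).continuousAt
      |>.eventually_ne (by simpa using ha22)
  have hE : ∀ᶠ ε in 𝓝[>] (0 : ℝ), a22 ^ 2 - ε * (a12 * a21) ≠ 0 :=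
    nhdsWithin_le_nhds <| (by fun_prop : Continuous fun ε : ℝ => a22 ^ 2 - ε * (a12 * a21))
      |>.continuousAt.eventually_ne (by simpa using ha22)
  have hεIoo : ∀ᶠ ε in 𝓝[>] (0 : ℝ), ε ∈ Ioo 0 ε₀ := Ioo_mem_nhdsGT hε₀
  set g : ℝ → ℝ := fun ε => (a11 * a22 + a12 * a21) * (a12 ^ 2 * σy ^ 2 - a12 * a21 * σx ^ 2)
    / (2 * (a11 * a22 - a12 * a21) * (a22 + ε * a11) * (a22 ^ 2 - ε * (a12 * a21)))
  have hg : Tendsto g (𝓝[>] 0) (𝓝 (g 0)) := by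
    refine (ContinuousAt.tendsto ?_).mono_left nhdsWithin_le_nhds
    refine ContinuousAt.div (by fun_prop) (by fun_prop) ?_
    simp [hT, ha22]
  apply isO2_of_isBigO hε₀
  refine IsBigO.congr' ((isBigO_refl (fun ε : ℝ => ε ^ 2) _).mul (hg.isBigO_one ℝ)) ?_
    (by simp)
  filter_upwards [hεIoo, hD, hE] with ε ⟨hε, hεε₀⟩ hDε hEε
  rw [(hsol ε hε hεε₀).c11_eq hε.ne' hT hDε, lyapunov_c11_add_approx_eq ha22 hT hDε hEε]

/-- Lemma 1 of Appendix B, asymptotic form: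
`c11(ε) = −(σx²(1 − 2εâ) + ε σy² a12²/a22²)/(2 ã (1 − εâ)) + O(ε²)` as `ε → 0⁺`. -/
theorem stmt5 (a11 a12 a21 a22 σx σy : ℝ) (ha22 : a22 ≠ 0)
    (hat : a11 - a12 * a21 / a22 ≠ 0)
    (ε₀ : ℝ) (hε₀ : 0 < ε₀) (c11 c12 c22 : ℝ → ℝ)
    (hsol : ∀ ε, 0 < ε → ε < ε₀ →
      SolvesLyapunov a11 a12 a21 a22 σx σy ε (c11 ε) (c12 ε) (c22 ε))
    (hbdd : ∃ M : ℝ, ∀ ε, 0 < ε → ε < ε₀ → |c11 ε| ≤ M ∧ |c12 ε| ≤ M) :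
    IsO2 ε₀ (fun ε =>
      c11 ε +
        (σx ^ 2 * (1 - 2 * ε * (a12 * a21 / a22 ^ 2)) + ε * σy ^ 2 * a12 ^ 2 / a22 ^ 2)
          / (2 * (a11 - a12 * a21 / a22) * (1 - ε * (a12 * a21 / a22 ^ 2)))) :=
  stmt5_general a11 a12 a21 a22 σx σy ha22 hat ε₀ hε₀ c11 c12 c22 hsol
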